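/- arXiv:1806.11271 — 3 statements merged into one kernel-verified Lean document; each statement's English description precedes it below -/
import Mathlib

section
/- Suppose a nonnegative rate R is achievable for the multicast channel under the energy constraint vector B⃗, i.e., for every ε ∈ (0,1) and δ > 0 there exist, for all sufficiently large n, a message set W, an encoder f : W → Xⁿ with (1/n)·log|W| > R − δ whose induced input distribution under a uniform message is B⃗-admissible, and decoders g_ℓ : Y(ℓ)ⁿ → W with max_{ℓ∈Θ} Pr[g_ℓ(Y(ℓ)₁ⁿ) ≠ W] < ε. Then R ≤ C(B⃗). Together with achievability, the operational capacity of the multicast channel equals C(B⃗). -/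
/-!
Fano's inequality, i.e. the log-sum inequality applied to the two events "decoded correctly" and
"decoded wrongly" under the joint law of message and output, shows that a code with `M` messages
and error probability below `ε` at every receiver has an admissible input law with
`min_ℓ I(X₁ⁿ; Y(ℓ)₁ⁿ) ≥ (1 - ε) log M - log 2`. Hence
`C(B⃗) ≥ C_n(B⃗)/n ≥ (1 - ε)(R - δ) - (log 2)/n`, and letting `ε = δ → 0` and `n → ∞` gives
`R ≤ C(B⃗)`. The bound `I ≤ H(X) ≤ n log |𝓧|` keeps the suprema defining `C_n` and `C` bounded,
so that they are not the junk value `0`.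
-/

open scoped BigOperators

noncomputable section

/-- A probability vector on a finite alphabet. -/
def IsProbVec {α : Type} [Fintype α] (p : α → ℝ) : Prop :=
  (∀ a, 0 ≤ p a) ∧ (∑ a, p a) = 1

/-- A (row-stochastic) discrete channel. -/
def IsChannel {α β : Type} [Fintype β] (W : α → β → ℝ) : Prop :=
  ∀ x, (∀ y, 0 ≤ W x y) ∧ (∑ y, W x y) = 1

/-- The memoryless `n`-letter extension of a channel. -/
def nCh {α β : Type} (W : α → β → ℝ) (n : ℕ) (x : Fin n → α) (y : Fin n → β) : ℝ :=
  ∏ i, W (x i) (y i)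

/-- Output distribution induced by input distribution `p` through channel `W`. -/
def outDist {α β : Type} [Fintype α] (p : α → ℝ) (W : α → β → ℝ) (y : β) : ℝ :=
  ∑ x, p x * W x y

/-- Expected value `E[b(Y)]` of an energy function `b` at the channel output. -/
def outEnergy {α β : Type} [Fintype α] [Fintype β] (p : α → ℝ) (W : α → β → ℝ)
    (b : β → ℝ) : ℝ :=
  ∑ y, outDist p W y * b y

/-- Additive block extension of an energy function. -/
def blockE {β : Type} (b : β → ℝ) {n : ℕ} (y : Fin n → β) : ℝ := ∑ i, b (y i)

/-- Mutual information `I(X;Y)` between the input `X ~ p` and the output of channel `W`. -/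
def mutInfo {α β : Type} [Fintype α] [Fintype β] (p : α → ℝ) (W : α → β → ℝ) : ℝ :=
  ∑ x, ∑ y, p x * W x y * Real.log (W x y / outDist p W y)

/-- The `n`-th multicast capacity-energy function with energy constraint vector `B`. -/
def CnVec {𝓧 : Type} [Fintype 𝓧] {L : ℕ} {𝓨 : Fin L → Type} [∀ ℓ, Fintype (𝓨 ℓ)]
    (W : ∀ ℓ, 𝓧 → 𝓨 ℓ → ℝ) (b : ∀ ℓ, 𝓨 ℓ → ℝ) (B : Fin L → ℝ) (n : ℕ) : ℝ :=
  sSup { r | ∃ p : (Fin n → 𝓧) → ℝ, IsProbVec p ∧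
      (∀ ℓ, (n : ℝ) * B ℓ ≤ outEnergy p (nCh (W ℓ) n) (blockE (b ℓ))) ∧
      r = ⨅ ℓ, mutInfo p (nCh (W ℓ) n) }

/-- The multicast capacity-energy function `C(B⃗) = sup_n C_n(B⃗)/n`. -/
def CcapVec {𝓧 : Type} [Fintype 𝓧] {L : ℕ} {𝓨 : Fin L → Type} [∀ ℓ, Fintype (𝓨 ℓ)]
    (W : ∀ ℓ, 𝓧 → 𝓨 ℓ → ℝ) (b : ∀ ℓ, 𝓨 ℓ → ℝ) (B : Fin L → ℝ) : ℝ :=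
  ⨆ n : ℕ+, CnVec W b B n / (n : ℝ)

/-- Input distribution on `𝓧ⁿ` induced by a uniformly distributed message through encoder `f`. -/
def inducedDist {𝓧 : Type} [Fintype 𝓧] [DecidableEq 𝓧] {n M : ℕ}
    (f : Fin M → (Fin n → 𝓧)) (x : Fin n → 𝓧) : ℝ :=
  ((Finset.univ.filter (fun w => f w = x)).card : ℝ) / M

/-- Average error probability of the code `(f, g)` over channel `W`. -/
def errProb {𝓧 𝓨 : Type} [Fintype 𝓨] {n M : ℕ}
    (W : 𝓧 → 𝓨 → ℝ) (f : Fin M → (Fin n → 𝓧)) (g : (Fin n → 𝓨) → Fin M) : ℝ :=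
  (M : ℝ)⁻¹ * ∑ w, ∑ y, if g y = w then 0 else nCh W n (f w) y

open Real Finset Filter Topology

theorem mul_log_sub_mul_log_div_le {a b c : ℝ} (ha : 0 ≤ a) (hb : 0 ≤ b) (hab : b = 0 → a = 0)
    (hc : 0 < c) : a * log c - a * log (a / b) ≤ c * b - a := by
  rcases ha.eq_or_lt with rfl | ha
  · simpa using mul_nonneg hc.le hb
  have hb : 0 < b := hb.lt_of_ne fun h => ha.ne' (hab h.symm)
  have key := log_le_sub_one_of_pos (x := c * b / a) (by positivity)
  rw [log_div (by positivity) ha.ne', log_mul hc.ne' hb.ne'] at key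
  rw [log_div ha.ne' hb.ne']
  have hcancel : a * (c * b / a - 1) = c * b - a := by field_simp
  nlinarith

theorem sum_mul_log_sum_div_sum_le {ι : Type*} (s : Finset ι) {a b : ι → ℝ}
    (ha : ∀ i ∈ s, 0 ≤ a i) (hb : ∀ i ∈ s, 0 ≤ b i) (hab : ∀ i ∈ s, b i = 0 → a i = 0) :
    (∑ i ∈ s, a i) * log ((∑ i ∈ s, a i) / ∑ i ∈ s, b i) ≤ ∑ i ∈ s, a i * log (a i / b i) := by
  rcases (sum_nonneg ha).eq_or_lt with hA | hA
  · have ha0 : ∀ i ∈ s, a i = 0 := (sum_eq_zero_iff_of_nonneg ha).mp hA.symm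
    rw [← hA, zero_mul, sum_eq_zero fun i hi => by rw [ha0 i hi, zero_mul]]
  obtain ⟨i, hi, hai⟩ := exists_ne_zero_of_sum_ne_zero hA.ne'
  have hB : 0 < ∑ i ∈ s, b i :=
    ((hb i hi).lt_of_ne fun h => hai (hab i hi h.symm)).trans_le (single_le_sum hb hi)
  have key := sum_le_sum fun i hi =>
    mul_log_sub_mul_log_div_le (ha i hi) (hb i hi) (hab i hi) (div_pos hA hB)
  rw [sum_sub_distrib, sum_sub_distrib, ← sum_mul, ← mul_sum, div_mul_cancel₀ _ hB.ne'] at key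
  linarith

/-- The binary relative entropy `D((a, 1 - a) ‖ (b, 1 - b))`. -/
def binKL (a b : ℝ) : ℝ := a * log (a / b) + (1 - a) * log ((1 - a) / (1 - b))

/-- Data processing for the map sending `i` to the truth value of `p i`. -/
theorem binKL_le_sum_mul_log_div {ι : Type*} (s : Finset ι) (p : ι → Prop) [DecidablePred p]
    {a b : ι → ℝ} (ha : ∀ i ∈ s, 0 ≤ a i) (hb : ∀ i ∈ s, 0 ≤ b i)
    (hab : ∀ i ∈ s, b i = 0 → a i = 0) (hA : ∑ i ∈ s, a i = 1) (hB : ∑ i ∈ s, b i = 1) :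
    binKL (∑ i ∈ s with p i, a i) (∑ i ∈ s with p i, b i) ≤ ∑ i ∈ s, a i * log (a i / b i) := by
  have hA' : 1 - ∑ i ∈ s with p i, a i = ∑ i ∈ s with ¬p i, a i := by
    rw [← hA, ← sum_filter_add_sum_filter_not s p]; ring
  have hB' : 1 - ∑ i ∈ s with p i, b i = ∑ i ∈ s with ¬p i, b i := by
    rw [← hB, ← sum_filter_add_sum_filter_not s p]; ring
  rw [binKL, hA', hB', ← sum_filter_add_sum_filter_not s p]
  exact add_le_add
    (sum_mul_log_sum_div_sum_le _ (fun i hi => ha i (mem_filter.1 hi).1)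
      (fun i hi => hb i (mem_filter.1 hi).1) fun i hi => hab i (mem_filter.1 hi).1)
    (sum_mul_log_sum_div_sum_le _ (fun i hi => ha i (mem_filter.1 hi).1)
      (fun i hi => hb i (mem_filter.1 hi).1) fun i hi => hab i (mem_filter.1 hi).1)

theorem mul_log_le_mul_log_div {x c : ℝ} (hx₀ : 0 ≤ x) (hx₁ : x ≤ 1) (hc₀ : 0 ≤ c) (hc₁ : c ≤ 1) :
    x * log x ≤ x * log (x / c) := by
  rcases hc₀.eq_or_lt with rfl | hc
  · simpa using mul_log_nonpos hx₀ hx₁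
  rcases hx₀.eq_or_lt with rfl | hx
  · simp
  rw [log_div hx.ne' hc.ne', mul_sub]
  linarith [mul_nonpos_of_nonneg_of_nonpos hx.le (log_nonpos hc.le hc₁)]

theorem mul_log_sub_log_two_le_binKL {a M : ℝ} (ha₀ : 0 ≤ a) (ha₁ : a ≤ 1) (hM : 1 ≤ M) :
    a * log M - log 2 ≤ binKL a M⁻¹ := by
  have hsucc : a * log (a / M⁻¹) = a * log a + a * log M := by
    rcases ha₀.eq_or_lt with rfl | ha
    · simp
    rw [div_inv_eq_mul, log_mul ha.ne' (by positivity)]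
    ring
  have hfail : (1 - a) * log (1 - a) ≤ (1 - a) * log ((1 - a) / (1 - M⁻¹)) :=
    mul_log_le_mul_log_div (by linarith) (by linarith) (by simp [inv_le_one_of_one_le₀ hM])
      (by simp [inv_nonneg.2 (zero_le_one.trans hM)])
  have hent : a * log a + (1 - a) * log (1 - a) = -binEntropy a := by
    simp only [binEntropy, log_inv]
    ring
  rw [binKL, hsucc]
  linarith [binEntropy_le_log_two (p := a)]

theorem IsChannel.nCh {α β : Type} [Fintype β] {W : α → β → ℝ} (hW : IsChannel W) (n : ℕ) :
    IsChannel (_root_.nCh W n) := by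
  intro x
  refine ⟨fun y => prod_nonneg fun i _ => (hW (x i)).1 (y i), ?_⟩
  have hfactor : ∑ y : Fin n → β, _root_.nCh W n x y = ∏ i, ∑ z : β, W (x i) z := by
    rw [prod_univ_sum, Fintype.piFinset_univ]
    rfl
  rw [hfactor]
  exact prod_eq_one fun i _ => (hW (x i)).2

section MutualInformation

variable {α β : Type} [Fintype α] [Fintype β] {p : α → ℝ} {V : α → β → ℝ}

theorem IsProbVec.mul_le_outDist (hp : IsProbVec p) (hV : IsChannel V) (x : α) (y : β) :
    p x * V x y ≤ outDist p V y :=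
  single_le_sum (f := fun x' => p x' * V x' y) (fun x' _ => mul_nonneg (hp.1 x') ((hV x').1 y))
    (mem_univ x)

theorem IsProbVec.sum_outDist (hp : IsProbVec p) (hV : IsChannel V) : ∑ y, outDist p V y = 1 := by
  simp only [outDist]
  rw [sum_comm]
  simp only [← mul_sum, fun x => (hV x).2, mul_one, hp.2]

theorem mul_mul_log_div_outDist_le (hp : IsProbVec p) (hV : IsChannel V) (x : α) (y : β) :
    p x * V x y * log (V x y / outDist p V y) ≤ V x y * negMulLog (p x) := by
  rcases (hp.1 x).eq_or_lt with h0 | hpx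
  · simp [← h0]
  rcases ((hV x).1 y).eq_or_lt with h0 | hVxy
  · simp [← h0]
  have hQ := hp.mul_le_outDist hV x y
  have hQpos : 0 < outDist p V y := (mul_pos hpx hVxy).trans_le hQ
  have hratio : V x y / outDist p V y ≤ (p x)⁻¹ := by
    rw [div_le_iff₀ hQpos, ← div_eq_inv_mul, le_div_iff₀ hpx, mul_comm]
    exact hQ
  have hlog := log_le_log (div_pos hVxy hQpos) hratio
  rw [log_inv] at hlog
  calc p x * V x y * log (V x y / outDist p V y) ≤ p x * V x y * -log (p x) :=
        mul_le_mul_of_nonneg_left hlog (mul_nonneg hpx.le hVxy.le)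
    _ = V x y * negMulLog (p x) := by rw [negMulLog]; ring

theorem mutInfo_le_sum_negMulLog (hp : IsProbVec p) (hV : IsChannel V) :
    mutInfo p V ≤ ∑ x, negMulLog (p x) := by
  refine sum_le_sum fun x _ => ?_
  calc ∑ y, p x * V x y * log (V x y / outDist p V y) ≤ ∑ y, V x y * negMulLog (p x) :=
        sum_le_sum fun y _ => mul_mul_log_div_outDist_le hp hV x y
    _ = negMulLog (p x) := by rw [← sum_mul, (hV x).2, one_mul]

theorem IsProbVec.sum_negMulLog_le_log_card (hp : IsProbVec p) :
    ∑ x, negMulLog (p x) ≤ log (Fintype.card α) := by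
  have hlogsum := sum_mul_log_sum_div_sum_le univ (a := p) (b := fun _ => 1)
    (fun x _ => hp.1 x) (fun _ _ => zero_le_one) fun _ _ h => absurd h one_ne_zero
  simp only [hp.2, sum_const, card_univ, nsmul_eq_mul, mul_one, one_mul, div_one, one_div,
    log_inv] at hlogsum
  simp only [negMulLog, neg_mul, sum_neg_distrib]
  linarith

theorem mutInfo_le_log_card (hp : IsProbVec p) (hV : IsChannel V) :
    mutInfo p V ≤ log (Fintype.card α) :=
  (mutInfo_le_sum_negMulLog hp hV).trans hp.sum_negMulLog_le_log_card

end MutualInformation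

section Codes

variable {𝓧 : Type} [Fintype 𝓧] [DecidableEq 𝓧] {n M : ℕ}

theorem sum_inducedDist_mul (f : Fin M → (Fin n → 𝓧)) (h : (Fin n → 𝓧) → ℝ) :
    ∑ x, inducedDist f x * h x = (M : ℝ)⁻¹ * ∑ w, h (f w) := by
  have hfiber : ∀ x, inducedDist f x * h x = (M : ℝ)⁻¹ * ∑ w with f w = x, h (f w) := by
    intro x
    rw [sum_congr rfl fun w hw => by rw [(mem_filter.1 hw).2], sum_const, nsmul_eq_mul,
      inducedDist]
    ring
  rw [sum_congr rfl fun x _ => hfiber x, ← mul_sum, sum_fiberwise]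

theorem isProbVec_inducedDist (hM : 0 < M) (f : Fin M → (Fin n → 𝓧)) :
    IsProbVec (inducedDist f) := by
  refine ⟨fun x => div_nonneg (Nat.cast_nonneg _) (Nat.cast_nonneg _), ?_⟩
  simpa [hM.ne'] using sum_inducedDist_mul f fun _ => 1

theorem outDist_inducedDist {β : Type} (f : Fin M → (Fin n → 𝓧)) (V : (Fin n → 𝓧) → β → ℝ)
    (y : β) : outDist (inducedDist f) V y = (M : ℝ)⁻¹ * ∑ w, V (f w) y :=
  sum_inducedDist_mul f fun x => V x y

/-- Fano's inequality. -/
theorem mul_log_sub_log_two_le_mutInfo_inducedDist {𝓨 : Type} [Fintype 𝓨] (hM : 0 < M)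
    {W : 𝓧 → 𝓨 → ℝ} (hW : IsChannel W) (f : Fin M → (Fin n → 𝓧)) (g : (Fin n → 𝓨) → Fin M) :
    (1 - errProb W f g) * log M - log 2 ≤ mutInfo (inducedDist f) (nCh W n) := by
  set V := nCh W n
  have hV : IsChannel V := hW.nCh n
  set Q := outDist (inducedDist f) V
  have hQ : IsProbVec Q :=
    ⟨fun y => sum_nonneg fun x _ => mul_nonneg ((isProbVec_inducedDist hM f).1 x) ((hV x).1 y),
      (isProbVec_inducedDist hM f).sum_outDist hV⟩
  have hMinv : (0 : ℝ) < (M : ℝ)⁻¹ := by positivity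
  -- the joint law of the message and the output, and the product of their marginals
  let F : Fin M × (Fin n → 𝓨) → ℝ := fun wy => (M : ℝ)⁻¹ * V (f wy.1) wy.2
  let G : Fin M × (Fin n → 𝓨) → ℝ := fun wy => (M : ℝ)⁻¹ * Q wy.2
  have hF : ∀ wy ∈ univ, 0 ≤ F wy := fun wy _ => mul_nonneg hMinv.le ((hV _).1 _)
  have hG : ∀ wy ∈ univ, 0 ≤ G wy := fun wy _ => mul_nonneg hMinv.le (hQ.1 _)
  have hsum : ∀ c : Fin M → (Fin n → 𝓨) → ℝ, (∀ w, ∑ y, c w y = 1) →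
      ∑ wy : Fin M × (Fin n → 𝓨), (M : ℝ)⁻¹ * c wy.1 wy.2 = 1 := by
    intro c hc
    simp only [Fintype.sum_prod_type, ← mul_sum, hc, sum_const, card_univ, Fintype.card_fin,
      nsmul_eq_mul, mul_one]
    exact inv_mul_cancel₀ (by exact_mod_cast hM.ne')
  have hFG : ∀ wy ∈ univ, G wy = 0 → F wy = 0 := by
    rintro ⟨w, y⟩ - hG0
    have hQ0 : ∑ w', V (f w') y = 0 := by
      simpa [G, hMinv.ne', Q, outDist_inducedDist] using hG0
    simp [F, (sum_eq_zero_iff_of_nonneg fun w' _ => (hV _).1 y).1 hQ0 w (mem_univ w)]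
  have hI : mutInfo (inducedDist f) V = ∑ wy, F wy * log (F wy / G wy) := by
    have hrow : mutInfo (inducedDist f) V
        = ∑ x, inducedDist f x * ∑ y, V x y * log (V x y / Q y) := by
      simp only [mutInfo, mul_sum, mul_assoc]
      rfl
    rw [hrow, sum_inducedDist_mul, mul_sum, Fintype.sum_prod_type]
    refine sum_congr rfl fun w _ => ?_
    rw [mul_sum]
    refine sum_congr rfl fun y _ => ?_
    rw [mul_div_mul_left _ _ hMinv.ne', mul_assoc]
  have hFsum : ∑ wy, F wy = 1 := hsum (fun w => V (f w)) fun w => (hV _).2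
  have herr : errProb W f g = ∑ wy with ¬g wy.2 = wy.1, F wy := by
    rw [sum_filter, Fintype.sum_prod_type, errProb, mul_sum]
    refine sum_congr rfl fun w _ => ?_
    rw [mul_sum]
    refine sum_congr rfl fun y _ => ?_
    split_ifs <;> simp [F, V]
  have hsuccF : ∑ wy with g wy.2 = wy.1, F wy = 1 - errProb W f g := by
    rw [herr, ← hFsum, ← sum_filter_add_sum_filter_not univ fun wy => g wy.2 = wy.1]
    ring
  have hsuccG : ∑ wy with g wy.2 = wy.1, G wy = (M : ℝ)⁻¹ := by
    rw [sum_filter, Fintype.sum_prod_type_right]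
    simp only [sum_ite_eq, mem_univ, if_true, G, ← mul_sum, hQ.2, mul_one]
  have hdp := binKL_le_sum_mul_log_div univ (fun wy => g wy.2 = wy.1) hF hG hFG hFsum
    (hsum (fun _ => Q) fun _ => hQ.2)
  rw [hsuccF, hsuccG, ← hI] at hdp
  have he₀ : 0 ≤ errProb W f g := herr ▸ sum_nonneg fun wy _ => hF wy (mem_univ _)
  have he₁ : 0 ≤ 1 - errProb W f g := hsuccF ▸ sum_nonneg fun wy _ => hF wy (mem_univ _)
  exact (mul_log_sub_log_two_le_binKL he₁ (by linarith) (by exact_mod_cast hM)).trans hdp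

end Codes

section Capacity

variable {𝓧 : Type} [Fintype 𝓧] {L : ℕ} [NeZero L] {𝓨 : Fin L → Type} [∀ ℓ, Fintype (𝓨 ℓ)]
  {W : ∀ ℓ, 𝓧 → 𝓨 ℓ → ℝ} (b : ∀ ℓ, 𝓨 ℓ → ℝ) (B : Fin L → ℝ)

theorem iInf_mutInfo_nCh_le (hW : ∀ ℓ, IsChannel (W ℓ)) {n : ℕ} {p : (Fin n → 𝓧) → ℝ}
    (hp : IsProbVec p) : ⨅ ℓ, mutInfo p (nCh (W ℓ) n) ≤ n * log (Fintype.card 𝓧) := by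
  refine (ciInf_le (Set.finite_range _).bddBelow 0).trans ?_
  refine (mutInfo_le_log_card hp ((hW 0).nCh n)).trans_eq ?_
  rw [Fintype.card_fun, Fintype.card_fin, Nat.cast_pow, log_pow]

theorem CnVec_le (hW : ∀ ℓ, IsChannel (W ℓ)) (n : ℕ) :
    CnVec W b B n ≤ n * log (Fintype.card 𝓧) :=
  Real.sSup_le (by rintro _ ⟨p, hp, -, rfl⟩; exact iInf_mutInfo_nCh_le hW hp)
    (mul_nonneg n.cast_nonneg (log_natCast_nonneg _))

theorem iInf_mutInfo_nCh_le_CnVec (hW : ∀ ℓ, IsChannel (W ℓ)) {n : ℕ} {p : (Fin n → 𝓧) → ℝ}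
    (hp : IsProbVec p) (hadm : ∀ ℓ, (n : ℝ) * B ℓ ≤ outEnergy p (nCh (W ℓ) n) (blockE (b ℓ))) :
    ⨅ ℓ, mutInfo p (nCh (W ℓ) n) ≤ CnVec W b B n :=
  le_csSup ⟨_, by rintro _ ⟨p, hp, -, rfl⟩; exact iInf_mutInfo_nCh_le hW hp⟩ ⟨p, hp, hadm, rfl⟩

theorem CnVec_div_le_CcapVec (hW : ∀ ℓ, IsChannel (W ℓ)) {n : ℕ} (hn : 0 < n) :
    CnVec W b B n / n ≤ CcapVec W b B := by
  refine le_ciSup (f := fun m : ℕ+ => CnVec W b B m / (m : ℝ)) ⟨log (Fintype.card 𝓧), ?_⟩ ⟨n, hn⟩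
  rintro _ ⟨m, rfl⟩
  rw [div_le_iff₀ (by positivity), mul_comm]
  exact CnVec_le b B hW m

theorem mul_div_sub_log_two_div_le_CcapVec [DecidableEq 𝓧] (hW : ∀ ℓ, IsChannel (W ℓ))
    {n M : ℕ} (hn : 0 < n) (hM : 0 < M) (f : Fin M → (Fin n → 𝓧))
    (g : ∀ ℓ, (Fin n → 𝓨 ℓ) → Fin M)
    (hadm : ∀ ℓ, (n : ℝ) * B ℓ ≤ outEnergy (inducedDist f) (nCh (W ℓ) n) (blockE (b ℓ)))
    {ε : ℝ} (herr : ∀ ℓ, errProb (W ℓ) f (g ℓ) ≤ ε) :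
    (1 - ε) * (log M / n) - log 2 / n ≤ CcapVec W b B := by
  have hfano : ∀ ℓ, (1 - ε) * log M - log 2 ≤ mutInfo (inducedDist f) (nCh (W ℓ) n) := fun ℓ =>
    le_trans (by gcongr; exact herr ℓ)
      (mul_log_sub_log_two_le_mutInfo_inducedDist hM (hW ℓ) f (g ℓ))
  have hCn : (1 - ε) * log M - log 2 ≤ CnVec W b B n :=
    (le_ciInf hfano).trans (iInf_mutInfo_nCh_le_CnVec b B hW (isProbVec_inducedDist hM f) hadm)
  calc (1 - ε) * (log M / n) - log 2 / n = ((1 - ε) * log M - log 2) / n := by ring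
    _ ≤ CnVec W b B n / n := by gcongr
    _ ≤ CcapVec W b B := CnVec_div_le_CcapVec b B hW hn

end Capacity

theorem multicast_converse_general
    {𝓧 : Type} [Fintype 𝓧] [DecidableEq 𝓧] {L : ℕ} (hL : 0 < L)
    {𝓨 : Fin L → Type} [∀ ℓ, Fintype (𝓨 ℓ)]
    (W : ∀ ℓ, 𝓧 → 𝓨 ℓ → ℝ) (hW : ∀ ℓ, IsChannel (W ℓ))
    (b : ∀ ℓ, 𝓨 ℓ → ℝ)
    (B : Fin L → ℝ) (R : ℝ)
    (hach : ∀ ε δ : ℝ, 0 < ε → ε < 1 → 0 < δ →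
      ∃ N : ℕ, ∀ n : ℕ, N ≤ n → 0 < n →
        ∃ (M : ℕ) (_ : 0 < M)
          (f : Fin M → (Fin n → 𝓧)) (g : ∀ ℓ, (Fin n → 𝓨 ℓ) → Fin M),
          R - δ < Real.log M / n ∧
          (∀ ℓ, (n : ℝ) * B ℓ ≤ outEnergy (inducedDist f) (nCh (W ℓ) n) (blockE (b ℓ))) ∧
          (∀ ℓ, errProb (W ℓ) f (g ℓ) < ε)) :
    R ≤ CcapVec W b B := by
  have : NeZero L := ⟨hL.ne'⟩
  have hlim : Tendsto (fun δ : ℝ => (1 - δ) * (R - δ) - δ) (𝓝[>] 0) (𝓝 R) := by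
    have hcont : Continuous fun δ : ℝ => (1 - δ) * (R - δ) - δ := by fun_prop
    simpa using (hcont.tendsto 0).mono_left nhdsWithin_le_nhds
  refine le_of_tendsto hlim ?_
  filter_upwards [Ioo_mem_nhdsGT one_pos] with δ ⟨hδ₀, hδ₁⟩
  obtain ⟨N, hN⟩ := hach δ δ hδ₀ hδ₁ hδ₀
  obtain ⟨n, hn⟩ := exists_nat_gt (max (N : ℝ) (log 2 / δ))
  obtain ⟨hNn, hlog2n⟩ := max_lt_iff.1 hn
  have hn₀ : 0 < n := by
    exact_mod_cast (div_pos (log_pos one_lt_two) hδ₀).trans hlog2n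
  have hlog2 : log 2 / n ≤ δ := by
    rw [div_le_iff₀ (by positivity), mul_comm, ← div_le_iff₀ hδ₀]
    exact hlog2n.le
  obtain ⟨M, hM, f, g, hrate, hadm, herr⟩ := hN n (by exact_mod_cast hNn.le) hn₀
  have hcode := mul_div_sub_log_two_div_le_CcapVec b B hW hn₀ hM f g hadm fun ℓ => (herr ℓ).le
  calc (1 - δ) * (R - δ) - δ ≤ (1 - δ) * (log M / n) - log 2 / n := by
        gcongr
    _ ≤ CcapVec W b B := hcode

/-- **Converse for multicast simultaneous information/energy transmission.**
If a nonnegative rate `R` is achievable for the multicast channel under the energy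
constraint vector `B⃗` — i.e. for every `ε ∈ (0,1)` and `δ > 0`, for all sufficiently
large `n` there are a message set, an encoder of rate exceeding `R - δ` whose induced
input distribution is `B⃗`-admissible, and decoders with worst-case average error
probability below `ε` — then `R ≤ C(B⃗)`. -/
theorem multicast_converse
    {𝓧 : Type} [Fintype 𝓧] [DecidableEq 𝓧] [Nonempty 𝓧] {L : ℕ} (hL : 0 < L)
    {𝓨 : Fin L → Type} [∀ ℓ, Fintype (𝓨 ℓ)]
    (W : ∀ ℓ, 𝓧 → 𝓨 ℓ → ℝ) (hW : ∀ ℓ, IsChannel (W ℓ))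
    (b : ∀ ℓ, 𝓨 ℓ → ℝ) (hb : ∀ ℓ y, 0 ≤ b ℓ y)
    (B : Fin L → ℝ) (R : ℝ) (hR0 : 0 ≤ R)
    (hach : ∀ ε δ : ℝ, 0 < ε → ε < 1 → 0 < δ →
      ∃ N : ℕ, ∀ n : ℕ, N ≤ n → 0 < n →
        ∃ (M : ℕ) (_ : 0 < M)
          (f : Fin M → (Fin n → 𝓧)) (g : ∀ ℓ, (Fin n → 𝓨 ℓ) → Fin M),
          R - δ < Real.log M / n ∧
          (∀ ℓ, (n : ℝ) * B ℓ ≤ outEnergy (inducedDist f) (nCh (W ℓ) n) (blockE (b ℓ))) ∧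
          (∀ ℓ, errProb (W ℓ) f (g ℓ) < ε)) :
    R ≤ CcapVec W b B :=
  multicast_converse_general hL W hW b B R hach
end
end

section
/- For every positive integer n, the n-th multicast capacity-energy function B ↦ C_n(B) is a concave function of B on the interval [0, B_max]: for all B₁, B₂ ∈ [0, B_max] and all α ∈ [0,1] with β = 1 − α, C_n(αB₁ + βB₂) ≥ α·C_n(B₁) + β·C_n(B₂). -/
open scoped BigOperators

noncomputable section

/-- The `n`-th multicast capacity-energy function with common energy function `b` and
common scalar energy constraint `B`:
`C_n(B) = max_{B-admissible X₁ⁿ} min_ℓ I(X₁ⁿ; Y(ℓ)₁ⁿ)`. -/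
def CnEq {𝓧 𝓨 : Type} [Fintype 𝓧] [Fintype 𝓨] {L : ℕ}
    (W : Fin L → 𝓧 → 𝓨 → ℝ) (b : 𝓨 → ℝ) (B : ℝ) (n : ℕ) : ℝ :=
  sSup { r | ∃ p : (Fin n → 𝓧) → ℝ, IsProbVec p ∧
      (∀ ℓ, (n : ℝ) * B ≤ outEnergy p (nCh (W ℓ) n) (blockE b)) ∧
      r = ⨅ ℓ, mutInfo p (nCh (W ℓ) n) }

/-- The largest commonly deliverable energy:
`B_max = max_q min_ℓ Σ_{x,y} q(x) p_{Y(ℓ)|X}(y|x) b(y)`. -/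
def Bmax {𝓧 𝓨 : Type} [Fintype 𝓧] [Fintype 𝓨] {L : ℕ}
    (W : Fin L → 𝓧 → 𝓨 → ℝ) (b : 𝓨 → ℝ) : ℝ :=
  sSup { r | ∃ q : 𝓧 → ℝ, IsProbVec q ∧ r = ⨅ ℓ, outEnergy q (W ℓ) b }

/-!
A distribution admissible for `B₁` mixed with one admissible for `B₂` is admissible for
`αB₁ + (1 - α)B₂`, because the expected output energy is linear in the input distribution.
Mutual information is concave in the input distribution: it is a linear function of the input
plus the entropy of the output distribution, and the output distribution depends linearly on
the input. Hence the minimum over the receivers is concave too, and the optimal value of a concave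
objective under concave constraints is concave in the level of the constraints. Admissible
inputs exist for every `B ≤ B_max`: take the i.i.d. extension of a maximiser in the definition
of `B_max`.
-/

open Finset Real

theorem ConcaveOn.ciInf {E ι : Type*} [AddCommMonoid E] [Module ℝ E] [Finite ι] [Nonempty ι]
    {s : Set E} {f : ι → E → ℝ} (hf : ∀ i, ConcaveOn ℝ s (f i)) :
    ConcaveOn ℝ s (fun x => ⨅ i, f i x) := by
  refine ⟨(hf (Classical.arbitrary ι)).1, fun x hx y hy a b ha hb hab => le_ciInf fun i => ?_⟩
  beta_reduce
  calc a • (⨅ i, f i x) + b • (⨅ i, f i y) ≤ a • f i x + b • f i y := by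
        gcongr <;> exact ciInf_le (Finite.bddBelow_range _) i
    _ ≤ f i (a • x + b • y) := (hf i).2 hx hy ha hb hab

theorem mul_sSup_add_mul_sSup_le {S T : Set ℝ} (hS : S.Nonempty) (hT : T.Nonempty)
    {a b c : ℝ} (ha : 0 ≤ a) (hb : 0 ≤ b) (h : ∀ s ∈ S, ∀ t ∈ T, a * s + b * t ≤ c) :
    a * sSup S + b * sSup T ≤ c := by
  have mul_sSup_le : ∀ {U : Set ℝ} {d e : ℝ}, U.Nonempty → 0 ≤ d → (∀ u ∈ U, d * u ≤ e) →
      d * sSup U ≤ e := by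
    intro U d e hU hd hUe
    rw [← smul_eq_mul, ← Real.sSup_smul_of_nonneg hd]
    exact csSup_le hU.smul_set (by rintro _ ⟨u, hu, rfl⟩; exact hUe u hu)
  have hSsup : ∀ t ∈ T, a * sSup S ≤ c - b * t := fun t ht =>
    mul_sSup_le hS ha fun s hs => by linarith [h s hs t ht]
  linarith [mul_sSup_le (e := c - a * sSup S) hT hb fun t ht => by linarith [hSsup t ht]]

section ConstrainedSup

variable {E ι : Type*} [AddCommGroup E] [Module ℝ E]

def constrainedSup (K : Set E) (f : E → ℝ) (g : ι → E → ℝ) (t : ℝ) : ℝ :=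
  sSup {r | ∃ p ∈ K, (∀ i, t ≤ g i p) ∧ r = f p}

theorem concaveOn_constrainedSup {K : Set E} {f : E → ℝ} {g : ι → E → ℝ}
    (hf : ConcaveOn ℝ K f) (hg : ∀ i, ConcaveOn ℝ K (g i)) (hbdd : BddAbove (f '' K)) :
    ConcaveOn ℝ {t | ∃ p ∈ K, ∀ i, t ≤ g i p} (constrainedSup K f g) := by
  have mix : ∀ {p₁ p₂ : E} {t₁ t₂ a b : ℝ}, p₁ ∈ K → p₂ ∈ K → 0 ≤ a → 0 ≤ b → a + b = 1 →
      (∀ i, t₁ ≤ g i p₁) → (∀ i, t₂ ≤ g i p₂) → ∀ i, a • t₁ + b • t₂ ≤ g i (a • p₁ + b • p₂) :=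
    fun hp₁ hp₂ ha hb hab ht₁ ht₂ i =>
      (add_le_add (smul_le_smul_of_nonneg_left (ht₁ i) ha)
        (smul_le_smul_of_nonneg_left (ht₂ i) hb)).trans ((hg i).2 hp₁ hp₂ ha hb hab)
  refine ⟨?_, ?_⟩
  · rintro t₁ ⟨p₁, hp₁, ht₁⟩ t₂ ⟨p₂, hp₂, ht₂⟩ a b ha hb hab
    exact ⟨_, hf.1 hp₁ hp₂ ha hb hab, mix hp₁ hp₂ ha hb hab ht₁ ht₂⟩
  · rintro t₁ ⟨p₁, hp₁, ht₁⟩ t₂ ⟨p₂, hp₂, ht₂⟩ a b ha hb hab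
    simp only [constrainedSup, smul_eq_mul]
    refine mul_sSup_add_mul_sSup_le ?_ ?_ ha hb ?_
    · exact ⟨_, p₁, hp₁, ht₁, rfl⟩
    · exact ⟨_, p₂, hp₂, ht₂, rfl⟩
    rintro _ ⟨q₁, hq₁, hc₁, rfl⟩ _ ⟨q₂, hq₂, hc₂, rfl⟩
    calc a * f q₁ + b * f q₂ ≤ f (a • q₁ + b • q₂) := hf.2 hq₁ hq₂ ha hb hab
      _ ≤ sSup {r | ∃ p ∈ K, (∀ i, a * t₁ + b * t₂ ≤ g i p) ∧ r = f p} := by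
        refine le_csSup (hbdd.mono ?_) ⟨_, hf.1 hq₁ hq₂ ha hb hab,
          mix hq₁ hq₂ ha hb hab hc₁ hc₂, rfl⟩
        rintro _ ⟨p, hp, -, rfl⟩
        exact ⟨p, hp, rfl⟩

end ConstrainedSup

section Channel

variable {α β : Type} [Fintype α]

theorem outDist_nonneg {p : α → ℝ} {W : α → β → ℝ} (hp : ∀ a, 0 ≤ p a)
    (hW : ∀ x y, 0 ≤ W x y) (y : β) : 0 ≤ outDist p W y :=
  sum_nonneg fun x _ => mul_nonneg (hp x) (hW x y)

theorem outDist_smul_add_smul (p q : α → ℝ) (W : α → β → ℝ) (a c : ℝ) (y : β) :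
    outDist (a • p + c • q) W y = a * outDist p W y + c * outDist q W y := by
  simp only [outDist, Pi.add_apply, Pi.smul_apply, smul_eq_mul, add_mul, mul_assoc,
    sum_add_distrib, mul_sum]

theorem outEnergy_smul_add_smul [Fintype β] (p q : α → ℝ) (W : α → β → ℝ) (b : β → ℝ)
    (a c : ℝ) :
    outEnergy (a • p + c • q) W b = a * outEnergy p W b + c * outEnergy q W b := by
  simp only [outEnergy, outDist_smul_add_smul, add_mul, mul_assoc, sum_add_distrib, mul_sum]

theorem concaveOn_outEnergy [Fintype β] (W : α → β → ℝ) (b : β → ℝ) :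
    ConcaveOn ℝ (stdSimplex ℝ α) (fun p => outEnergy p W b) :=
  ⟨convex_stdSimplex ℝ α, fun p _ q _ a c _ _ _ => (outEnergy_smul_add_smul p q W b a c).ge⟩

theorem outEnergy_eq_sum [Fintype β] (p : α → ℝ) (W : α → β → ℝ) (b : β → ℝ) :
    outEnergy p W b = ∑ x, p x * ∑ y, W x y * b y := by
  simp only [outEnergy, outDist, sum_mul, mul_sum, mul_assoc]
  exact sum_comm

theorem mutInfo_eq_sum_add_sum_negMulLog [Fintype β] {p : α → ℝ} {W : α → β → ℝ}
    (hp : ∀ a, 0 ≤ p a) (hW : ∀ x y, 0 ≤ W x y) :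
    mutInfo p W = ∑ x, p x * ∑ y, W x y * log (W x y) + ∑ y, negMulLog (outDist p W y) := by
  have hterm : ∀ x y, p x * W x y * log (W x y / outDist p W y)
      = p x * W x y * (log (W x y) - log (outDist p W y)) := by
    intro x y
    rcases (mul_nonneg (hp x) (hW x y)).eq_or_lt with h | h
    · rw [← h, zero_mul, zero_mul]
    · have hout : 0 < outDist p W y := h.trans_le <|
        single_le_sum (f := fun x => p x * W x y) (fun i _ => mul_nonneg (hp i) (hW i y))
          (mem_univ x)
      rw [log_div (right_ne_zero_of_mul h.ne') hout.ne']
  have hout : ∀ y, ∑ x, p x * W x y * log (outDist p W y) = -negMulLog (outDist p W y) := by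
    intro y
    rw [← sum_mul, negMulLog, outDist]
    ring
  simp only [mutInfo, hterm, mul_sub, sum_sub_distrib]
  rw [sum_comm (f := fun x y => p x * W x y * log (outDist p W y))]
  simp only [hout, sum_neg_distrib, sub_neg_eq_add]
  simp only [mul_sum, mul_assoc]

theorem concaveOn_mutInfo [Fintype β] {W : α → β → ℝ} (hW : ∀ x y, 0 ≤ W x y) :
    ConcaveOn ℝ (stdSimplex ℝ α) (fun p => mutInfo p W) := by
  refine ⟨convex_stdSimplex ℝ α, fun p hp q hq a c ha hc hac => ?_⟩
  have hpq := convex_stdSimplex ℝ α hp hq ha hc hac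
  have hent : ∀ y, a * negMulLog (outDist p W y) + c * negMulLog (outDist q W y)
      ≤ negMulLog (outDist (a • p + c • q) W y) := fun y => by
    simpa only [outDist_smul_add_smul, smul_eq_mul] using
      concaveOn_negMulLog.2 (outDist_nonneg hp.1 hW y) (outDist_nonneg hq.1 hW y) ha hc hac
  have hsum := sum_le_sum fun y (_ : y ∈ univ) => hent y
  simp only [smul_eq_mul]
  rw [mutInfo_eq_sum_add_sum_negMulLog hp.1 hW, mutInfo_eq_sum_add_sum_negMulLog hq.1 hW,
    mutInfo_eq_sum_add_sum_negMulLog hpq.1 hW]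
  simp only [sum_add_distrib, ← mul_sum, Pi.add_apply, Pi.smul_apply, smul_eq_mul, add_mul,
    mul_assoc] at hsum ⊢
  linarith

theorem mutInfo_le_card [Fintype β] {p : α → ℝ} {W : α → β → ℝ} (hp : IsProbVec p)
    (hW : IsChannel W) : mutInfo p W ≤ Fintype.card β := by
  have hcond : ∑ x, p x * ∑ y, W x y * log (W x y) ≤ 0 :=
    sum_nonpos fun x _ => mul_nonpos_of_nonneg_of_nonpos (hp.1 x) <|
      sum_nonpos fun y _ => mul_log_nonpos ((hW x).1 y) <|
        (single_le_sum (fun z _ => (hW x).1 z) (mem_univ y)).trans_eq (hW x).2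
  have hout := outDist_nonneg hp.1 (fun x => (hW x).1)
  have hent : ∑ y, negMulLog (outDist p W y) ≤ ∑ _y : β, (1 : ℝ) :=
    sum_le_sum fun y _ => (negMulLog_le_one_sub_self (hout y)).trans (by linarith [hout y])
  rw [mutInfo_eq_sum_add_sum_negMulLog hp.1 fun x => (hW x).1]
  simp only [sum_const, card_univ, nsmul_eq_mul, mul_one] at hent
  linarith

end Channel

section Memoryless

variable {α β : Type}

theorem sum_pi_prod_mul_apply {γ : Type} [Fintype γ] {n : ℕ} (f : Fin n → γ → ℝ)
    (hf : ∀ j, ∑ z, f j z = 1) (g : γ → ℝ) (i : Fin n) :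
    ∑ y : Fin n → γ, (∏ j, f j (y j)) * g (y i) = ∑ z, f i z * g z := by
  calc ∑ y : Fin n → γ, (∏ j, f j (y j)) * g (y i)
      = ∑ y : Fin n → γ, ∏ j, f j (y j) * (if j = i then g (y j) else 1) := by
        refine sum_congr rfl fun y _ => ?_
        rw [prod_mul_distrib, prod_ite_eq', if_pos (mem_univ i)]
    _ = ∏ j, ∑ z, f j z * (if j = i then g z else 1) :=
        (Fintype.prod_sum fun j z => f j z * (if j = i then g z else 1)).symm
    _ = ∑ z, f i z * g z := by
        rw [prod_eq_single i (fun j _ hj => by simp [hj, hf]) (by simp)]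
        simp

theorem isChannel_nCh [Fintype β] {W : α → β → ℝ} (hW : IsChannel W) (n : ℕ) :
    IsChannel (nCh W n) :=
  fun x => ⟨fun y => prod_nonneg fun i _ => (hW (x i)).1 (y i),
    by simp [nCh, ← Fintype.prod_sum, (hW _).2]⟩

theorem sum_nCh_mul_blockE [Fintype β] {W : α → β → ℝ} (hW : IsChannel W) (b : β → ℝ) {n : ℕ}
    (x : Fin n → α) :
    ∑ y, nCh W n x y * blockE b y = ∑ i, ∑ z, W (x i) z * b z := by
  simp only [nCh, blockE, mul_sum]
  rw [sum_comm]
  exact sum_congr rfl fun i _ =>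
    sum_pi_prod_mul_apply (fun j => W (x j)) (fun j => (hW (x j)).2) b i

def iidDist (q : α → ℝ) (n : ℕ) (x : Fin n → α) : ℝ := ∏ i, q (x i)

theorem isProbVec_iidDist [Fintype α] {q : α → ℝ} (hq : IsProbVec q) (n : ℕ) :
    IsProbVec (iidDist q n) :=
  ⟨fun x => prod_nonneg fun i _ => hq.1 (x i), by simp [iidDist, ← Fintype.prod_sum, hq.2]⟩

theorem outEnergy_iidDist_nCh [Fintype α] [Fintype β] {q : α → ℝ} {W : α → β → ℝ}
    (hq : IsProbVec q) (hW : IsChannel W) (b : β → ℝ) (n : ℕ) :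
    outEnergy (iidDist q n) (nCh W n) (blockE b) = n * outEnergy q W b := by
  simp only [outEnergy_eq_sum, sum_nCh_mul_blockE hW]
  calc ∑ x, iidDist q n x * ∑ i, ∑ z, W (x i) z * b z
      = ∑ i, ∑ x, iidDist q n x * ∑ z, W (x i) z * b z :=
        (sum_congr rfl fun x _ => mul_sum _ _ _).trans sum_comm
    _ = ∑ _i : Fin n, ∑ a, q a * ∑ z, W a z * b z := sum_congr rfl fun i _ =>
        sum_pi_prod_mul_apply (fun _ => q) (fun _ => hq.2) (fun a => ∑ z, W a z * b z) i
    _ = n * ∑ a, q a * ∑ z, W a z * b z := by simp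

end Memoryless

section Multicast

variable {𝓧 𝓨 : Type} [Fintype 𝓧] [Fintype 𝓨] {L : ℕ}

theorem exists_isProbVec_Bmax_le_outEnergy [Nonempty 𝓧] [NeZero L]
    (W : Fin L → 𝓧 → 𝓨 → ℝ) (b : 𝓨 → ℝ) :
    ∃ q, IsProbVec q ∧ ∀ ℓ, Bmax W b ≤ outEnergy q (W ℓ) b := by
  have hcont : Continuous fun q : 𝓧 → ℝ => ⨅ ℓ, outEnergy q (W ℓ) b := by
    simp only [← inf'_univ_eq_ciInf]
    exact Continuous.finset_inf'_apply univ_nonempty fun ℓ _ => by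
      unfold outEnergy outDist
      fun_prop
  obtain ⟨q, hq, hmax⟩ := (isCompact_stdSimplex ℝ 𝓧).exists_isMaxOn
    Set.Nonempty.of_subtype hcont.continuousOn
  have hBmax : Bmax W b ≤ ⨅ ℓ, outEnergy q (W ℓ) b := by
    refine csSup_le ⟨_, q, hq, rfl⟩ ?_
    rintro _ ⟨q', hq', rfl⟩
    exact hmax hq'
  exact ⟨q, hq, fun ℓ => hBmax.trans (ciInf_le (Finite.bddBelow_range _) ℓ)⟩

theorem exists_admissible_of_le_Bmax [Nonempty 𝓧] [NeZero L] {W : Fin L → 𝓧 → 𝓨 → ℝ}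
    (hW : ∀ ℓ, IsChannel (W ℓ)) (b : 𝓨 → ℝ) (n : ℕ) {B : ℝ} (hB : B ≤ Bmax W b) :
    ∃ p ∈ stdSimplex ℝ (Fin n → 𝓧), ∀ ℓ, n * B ≤ outEnergy p (nCh (W ℓ) n) (blockE b) := by
  obtain ⟨q, hq, hqmax⟩ := exists_isProbVec_Bmax_le_outEnergy W b
  refine ⟨iidDist q n, isProbVec_iidDist hq n, fun ℓ => ?_⟩
  rw [outEnergy_iidDist_nCh hq (hW ℓ)]
  exact mul_le_mul_of_nonneg_left (hB.trans (hqmax ℓ)) n.cast_nonneg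

theorem bddAbove_iInf_mutInfo [NeZero L] {W : Fin L → 𝓧 → 𝓨 → ℝ}
    (hW : ∀ ℓ, IsChannel (W ℓ)) (n : ℕ) :
    BddAbove ((fun p => ⨅ ℓ, mutInfo p (nCh (W ℓ) n)) '' stdSimplex ℝ (Fin n → 𝓧)) := by
  refine ⟨Fintype.card (Fin n → 𝓨), ?_⟩
  rintro _ ⟨p, hp, rfl⟩
  exact (ciInf_le (Finite.bddBelow_range _) 0).trans
    (mutInfo_le_card hp (isChannel_nCh (hW 0) n))

end Multicast

theorem CnEq_concave_general
    {𝓧 𝓨 : Type} [Fintype 𝓧] [Fintype 𝓨] [Nonempty 𝓧] {L : ℕ} (hL : 0 < L)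
    (W : Fin L → 𝓧 → 𝓨 → ℝ) (hW : ∀ ℓ, IsChannel (W ℓ))
    (b : 𝓨 → ℝ)
    (n : ℕ) (B₁ B₂ α : ℝ)
    (hB₁ : B₁ ∈ Set.Icc 0 (Bmax W b)) (hB₂ : B₂ ∈ Set.Icc 0 (Bmax W b))
    (hα : α ∈ Set.Icc (0 : ℝ) 1) :
    α * CnEq W b B₁ n + (1 - α) * CnEq W b B₂ n
      ≤ CnEq W b (α * B₁ + (1 - α) * B₂) n := by
  have : NeZero L := ⟨hL.ne'⟩
  have hCn : ∀ B, CnEq W b B n = constrainedSup (stdSimplex ℝ (Fin n → 𝓧))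
      (fun p => ⨅ ℓ, mutInfo p (nCh (W ℓ) n))
      (fun ℓ p => outEnergy p (nCh (W ℓ) n) (blockE b)) (n * B) := fun _ => rfl
  have hconcave := concaveOn_constrainedSup
    (ConcaveOn.ciInf fun ℓ => concaveOn_mutInfo fun x => (isChannel_nCh (hW ℓ) n x).1)
    (fun ℓ => concaveOn_outEnergy (nCh (W ℓ) n) (blockE b)) (bddAbove_iInf_mutInfo hW n)
  have key := hconcave.2 (exists_admissible_of_le_Bmax hW b n hB₁.2)
    (exists_admissible_of_le_Bmax hW b n hB₂.2) hα.1 (sub_nonneg.2 hα.2) (add_sub_cancel α 1)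
  simp only [hCn, smul_eq_mul] at key ⊢
  rwa [show (n : ℝ) * (α * B₁ + (1 - α) * B₂) = α * (n * B₁) + (1 - α) * (n * B₂) by ring]

/-- **Concavity of the `n`-th multicast capacity-energy function** (Theorem 2):
for all `B₁, B₂ ∈ [0, B_max]` and `α ∈ [0,1]` with `β = 1 - α`,
`C_n(α B₁ + β B₂) ≥ α C_n(B₁) + β C_n(B₂)`. -/
theorem CnEq_concave
    {𝓧 𝓨 : Type} [Fintype 𝓧] [Fintype 𝓨] [Nonempty 𝓧] {L : ℕ} (hL : 0 < L)
    (W : Fin L → 𝓧 → 𝓨 → ℝ) (hW : ∀ ℓ, IsChannel (W ℓ))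
    (b : 𝓨 → ℝ) (hb : ∀ y, 0 ≤ b y)
    (n : ℕ) (hn : 0 < n) (B₁ B₂ α : ℝ)
    (hB₁ : B₁ ∈ Set.Icc 0 (Bmax W b)) (hB₂ : B₂ ∈ Set.Icc 0 (Bmax W b))
    (hα : α ∈ Set.Icc (0 : ℝ) 1) :
    α * CnEq W b B₁ n + (1 - α) * CnEq W b B₂ n
      ≤ CnEq W b (α * B₁ + (1 - α) * B₂) n :=
  CnEq_concave_general hL W hW b n B₁ B₂ α hB₁ hB₂ hα

end
end

section
/- For the Gaussian multicast setting, the multicast capacity-energy function reduces to an optimization over a single extremal channel: C(B, P) = sup over cumulative distribution functions F on [−P, P] satisfying ∫_{−P}^{P} x² dF(x) + σ²_{ℓ_min} ≥ B of I(X; Y(ℓ_max)), where X ~ F, ℓ_min = argmin_ℓ σ_ℓ², and ℓ_max = argmax_ℓ σ_ℓ². That is, the energy constraint need only be imposed for the least-noisy channel and the mutual information need only be evaluated for the noisiest channel. -/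
open MeasureTheory

noncomputable section

/-- Gaussian transition density `Q(y|x)` of an AWGN channel with noise variance `v`. -/
def gpdf (v : ℝ) (x y : ℝ) : ℝ :=
  (Real.sqrt (2 * Real.pi * v))⁻¹ * Real.exp (-(y - x) ^ 2 / (2 * v))

/-- Output density `p(y; F)` of the AWGN channel with noise variance `v`
when the input has distribution `μ`. -/
def outDens (v : ℝ) (μ : Measure ℝ) (y : ℝ) : ℝ := ∫ x, gpdf v x y ∂μ

/-- Marginal information density `i(x; F) = ∫ Q(y|x) log (Q(y|x) / p(y;F)) dy`. -/
def infoDens (v : ℝ) (μ : Measure ℝ) (x : ℝ) : ℝ :=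
  ∫ y, gpdf v x y * Real.log (gpdf v x y / outDens v μ y)

/-- Mutual information `I(X; Y) = ∫ i(x; F) dF(x)` of the AWGN channel with noise
variance `v` and input distribution `μ`. -/
def miAWGN (v : ℝ) (μ : Measure ℝ) : ℝ := ∫ x, infoDens v μ x ∂μ

open Real

namespace GaussAux

lemma two_pi_v_pos {v : ℝ} (hv : 0 < v) : 0 < 2 * Real.pi * v := by positivity

lemma gpdf_pos {v : ℝ} (hv : 0 < v) (x y : ℝ) : 0 < gpdf v x y := by
  unfold gpdf
  have := two_pi_v_pos hv
  positivity

lemma gpdf_le {v : ℝ} (hv : 0 < v) (x y : ℝ) :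
    gpdf v x y ≤ (Real.sqrt (2 * Real.pi * v))⁻¹ := by
  unfold gpdf
  have h1 : (0:ℝ) ≤ (Real.sqrt (2 * Real.pi * v))⁻¹ := by positivity
  have h2 : Real.exp (-(y - x) ^ 2 / (2 * v)) ≤ 1 := by
    rw [Real.exp_le_one_iff]
    have : (0:ℝ) ≤ (y - x) ^ 2 := sq_nonneg _
    have h2v : (0:ℝ) < 2 * v := by linarith
    rw [div_nonpos_iff]
    right; constructor
    · linarith
    · linarith
  calc (Real.sqrt (2 * Real.pi * v))⁻¹ * Real.exp (-(y - x) ^ 2 / (2 * v))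
      ≤ (Real.sqrt (2 * Real.pi * v))⁻¹ * 1 := by
        exact mul_le_mul_of_nonneg_left h2 h1
    _ = _ := by ring

lemma continuous_gpdf (v : ℝ) : Continuous (fun p : ℝ × ℝ => gpdf v p.1 p.2) := by
  unfold gpdf
  fun_prop

lemma measurable_gpdf (v : ℝ) : Measurable (fun p : ℝ × ℝ => gpdf v p.1 p.2) :=
  (continuous_gpdf v).measurable

lemma gpdf_shift (v x y : ℝ) : gpdf v x y = gpdf v 0 (y - x) := by
  unfold gpdf; ring_nf

lemma integrable_gpdf {v : ℝ} (hv : 0 < v) (x : ℝ) : Integrable (gpdf v x) := by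
  have h2v : (0:ℝ) < (2 * v)⁻¹ := by positivity
  have : (fun y => gpdf v x y)
      = fun y => (Real.sqrt (2 * Real.pi * v))⁻¹ * Real.exp (-(2*v)⁻¹ * (y - x) ^ 2) := by
    funext y; unfold gpdf; ring_nf
  rw [show gpdf v x = fun y => (Real.sqrt (2 * Real.pi * v))⁻¹ * Real.exp (-(2*v)⁻¹ * (y - x) ^ 2) from this]
  exact (((integrable_exp_neg_mul_sq h2v).comp_sub_right x)).const_mul _

lemma integral_gpdf {v : ℝ} (hv : 0 < v) (x : ℝ) : ∫ y, gpdf v x y = 1 := by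
  have h2v : (0:ℝ) < (2 * v)⁻¹ := by positivity
  have h : (fun y => gpdf v x y)
      = fun y => (Real.sqrt (2 * Real.pi * v))⁻¹ * Real.exp (-(2*v)⁻¹ * (y - x) ^ 2) := by
    funext y; unfold gpdf; ring_nf
  rw [h, integral_const_mul]
  rw [integral_sub_right_eq_self (fun y => Real.exp (-(2*v)⁻¹ * y ^ 2)) x]
  rw [integral_gaussian]
  rw [inv_mul_eq_one₀ (by positivity)]
  congr 1
  field_simp


lemma integrable_sq_mul_exp {b : ℝ} (hb : 0 < b) :
    Integrable (fun z : ℝ => z ^ 2 * Real.exp (-b * z ^ 2)) := by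
  apply Integrable.mono' ((integrable_exp_neg_mul_sq (half_pos hb)).const_mul (2 / b))
  · apply Measurable.aestronglyMeasurable; fun_prop
  · refine Filter.Eventually.of_forall (fun z => ?_)
    have h1 : b / 2 * z ^ 2 ≤ Real.exp (b / 2 * z ^ 2) := by
      have := Real.add_one_le_exp (b / 2 * z ^ 2)
      nlinarith [sq_nonneg z]
    have h2 : z ^ 2 ≤ 2 / b * Real.exp (b / 2 * z ^ 2) := by
      have hb2 : (0:ℝ) < 2 / b := by positivity
      calc z ^ 2 = 2 / b * (b / 2 * z ^ 2) := by field_simp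
        _ ≤ 2 / b * Real.exp (b / 2 * z ^ 2) := by nlinarith
    have hE : 0 < Real.exp (-(b/2) * z ^ 2) := Real.exp_pos _
    have hFE : Real.exp (b / 2 * z ^ 2) * Real.exp (-(b/2) * z ^ 2) = 1 := by
      rw [← Real.exp_add]; ring_nf; exact Real.exp_zero
    have h3 : Real.exp (-b * z ^ 2) = Real.exp (-(b/2) * z ^ 2) * Real.exp (-(b/2) * z ^ 2) := by
      rw [← Real.exp_add]; ring_nf
    have h2E : z ^ 2 * Real.exp (-(b/2) * z ^ 2) ≤ 2 / b := by
      have := mul_le_mul_of_nonneg_right h2 hE.le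
      calc z ^ 2 * Real.exp (-(b/2) * z ^ 2)
          ≤ 2 / b * Real.exp (b / 2 * z ^ 2) * Real.exp (-(b/2) * z ^ 2) := this
        _ = 2 / b := by rw [mul_assoc, hFE, mul_one]
    rw [Real.norm_eq_abs, abs_of_nonneg (by positivity), h3]
    nlinarith [mul_le_mul_of_nonneg_right h2E hE.le]

lemma integrable_gpdf_mul_sq {v : ℝ} (hv : 0 < v) (x : ℝ) :
    Integrable (fun y => gpdf v x y * y ^ 2) := by
  have hc : (0:ℝ) < (2 * v)⁻¹ := by positivity
  have hF : Integrable (fun z : ℝ =>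
      2 * (z ^ 2 * Real.exp (-(2*v)⁻¹ * z ^ 2)) + 2 * x ^ 2 * Real.exp (-(2*v)⁻¹ * z ^ 2)) :=
    ((integrable_sq_mul_exp hc).const_mul 2).add ((integrable_exp_neg_mul_sq hc).const_mul _)
  apply Integrable.mono' (((hF.comp_sub_right x)).const_mul (Real.sqrt (2 * Real.pi * v))⁻¹)
  · apply Measurable.aestronglyMeasurable
    exact ((measurable_gpdf v).comp (measurable_const.prodMk measurable_id)).mul (by fun_prop)
  · refine Filter.Eventually.of_forall (fun y => ?_)
    have hg := gpdf_pos hv x y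
    have hsq : y ^ 2 ≤ 2 * (y - x) ^ 2 + 2 * x ^ 2 := by nlinarith [sq_nonneg (y - 2 * x)]
    rw [Real.norm_eq_abs, abs_of_nonneg (by positivity)]
    have h1 : gpdf v x y * y ^ 2 ≤ gpdf v x y * (2 * (y - x) ^ 2 + 2 * x ^ 2) :=
      mul_le_mul_of_nonneg_left hsq hg.le
    refine h1.trans (le_of_eq ?_)
    unfold gpdf
    rw [show -(y - x) ^ 2 / (2 * v) = -(2*v)⁻¹ * (y - x) ^ 2 by field_simp]
    ring

lemma gpdf_conv {u v : ℝ} (hu : 0 < u) (hv : 0 < v) (x y : ℝ) :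
    ∫ t, gpdf u 0 t * gpdf v x (y - t) = gpdf (u + v) x y := by
  have huv : 0 < u + v := by linarith
  have hs : 0 < u * v / (u + v) := by positivity
  have hpt : ∀ t, gpdf u 0 t * gpdf v x (y - t)
      = gpdf (u + v) x y * gpdf (u * v / (u + v)) (u * (y - x) / (u + v)) t := by
    intro t
    have hexp : Real.exp (-(t - 0) ^ 2 / (2 * u)) * Real.exp (-(y - t - x) ^ 2 / (2 * v))
        = Real.exp (-(y - x) ^ 2 / (2 * (u + v)))
          * Real.exp (-(t - u * (y - x) / (u + v)) ^ 2 / (2 * (u * v / (u + v)))) := by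
      rw [← Real.exp_add, ← Real.exp_add]
      congr 1
      field_simp
      ring
    have hcst : (Real.sqrt (2 * Real.pi * u))⁻¹ * (Real.sqrt (2 * Real.pi * v))⁻¹
        = (Real.sqrt (2 * Real.pi * (u + v)))⁻¹
          * (Real.sqrt (2 * Real.pi * (u * v / (u + v))))⁻¹ := by
      rw [← mul_inv, ← mul_inv, ← Real.sqrt_mul (by positivity), ← Real.sqrt_mul (by positivity)]
      congr 2
      field_simp
    unfold gpdf
    calc (Real.sqrt (2 * Real.pi * u))⁻¹ * Real.exp (-(t - 0) ^ 2 / (2 * u))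
          * ((Real.sqrt (2 * Real.pi * v))⁻¹ * Real.exp (-(y - t - x) ^ 2 / (2 * v)))
        = (Real.sqrt (2 * Real.pi * u))⁻¹ * (Real.sqrt (2 * Real.pi * v))⁻¹
          * (Real.exp (-(t - 0) ^ 2 / (2 * u)) * Real.exp (-(y - t - x) ^ 2 / (2 * v))) := by ring
      _ = (Real.sqrt (2 * Real.pi * (u + v)))⁻¹
          * (Real.sqrt (2 * Real.pi * (u * v / (u + v))))⁻¹
          * (Real.exp (-(y - x) ^ 2 / (2 * (u + v)))
            * Real.exp (-(t - u * (y - x) / (u + v)) ^ 2 / (2 * (u * v / (u + v))))) := by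
          rw [hexp, hcst]
      _ = _ := by ring
  simp_rw [hpt]
  rw [integral_const_mul, integral_gpdf hs, mul_one]

end GaussAux

namespace GaussAux

lemma measurable_outDens (v : ℝ) (μ : Measure ℝ) [SFinite μ] :
    Measurable (outDens v μ) := by
  have h : StronglyMeasurable (fun p : ℝ × ℝ => gpdf v p.2 p.1) :=
    ((continuous_gpdf v).comp (continuous_snd.prodMk continuous_fst)).stronglyMeasurable
  exact h.integral_prod_right'.measurable

lemma integrable_gpdf_dμ {v : ℝ} (hv : 0 < v) (μ : Measure ℝ) [IsFiniteMeasure μ] (y : ℝ) :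
    Integrable (fun x => gpdf v x y) μ := by
  apply Integrable.mono' (integrable_const (Real.sqrt (2 * Real.pi * v))⁻¹)
  · exact (((continuous_gpdf v).comp (continuous_id.prodMk continuous_const))).aestronglyMeasurable
  · refine Filter.Eventually.of_forall (fun x => ?_)
    rw [Real.norm_eq_abs, abs_of_nonneg (gpdf_pos hv x y).le]
    exact gpdf_le hv x y

lemma outDens_le {v : ℝ} (hv : 0 < v) (μ : Measure ℝ) [IsProbabilityMeasure μ] (y : ℝ) :
    outDens v μ y ≤ (Real.sqrt (2 * Real.pi * v))⁻¹ := by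
  unfold outDens
  calc ∫ x, gpdf v x y ∂μ ≤ ∫ _x, (Real.sqrt (2 * Real.pi * v))⁻¹ ∂μ :=
        integral_mono (integrable_gpdf_dμ hv μ y) (integrable_const _)
          (fun x => gpdf_le hv x y)
    _ = (Real.sqrt (2 * Real.pi * v))⁻¹ := by simp

lemma ae_mem_Icc {P : ℝ} {μ : Measure ℝ} [IsProbabilityMeasure μ]
    (hsupp : μ (Set.Icc (-P) P) = 1) : ∀ᵐ x ∂μ, x ∈ Set.Icc (-P) P := by
  rw [ae_iff]
  have : {x | ¬ x ∈ Set.Icc (-P) P} = (Set.Icc (-P) P)ᶜ := rfl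
  rw [this, measure_compl measurableSet_Icc (measure_ne_top μ _), hsupp]
  simp

lemma outDens_ge {v P : ℝ} (hv : 0 < v) {μ : Measure ℝ} [IsProbabilityMeasure μ]
    (hsupp : μ (Set.Icc (-P) P) = 1) (y : ℝ) :
    (Real.sqrt (2 * Real.pi * v))⁻¹ * Real.exp (-(|y| + P) ^ 2 / (2 * v)) ≤ outDens v μ y := by
  have hbd : ∀ᵐ x ∂μ, (Real.sqrt (2 * Real.pi * v))⁻¹ * Real.exp (-(|y| + P) ^ 2 / (2 * v))
      ≤ gpdf v x y := by
    filter_upwards [ae_mem_Icc hsupp] with x hx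
    have hx' : |x| ≤ P := abs_le.mpr ⟨hx.1, hx.2⟩
    have h1 : (y - x) ^ 2 ≤ (|y| + P) ^ 2 := by
      have : |y - x| ≤ |y| + P := (abs_sub _ _).trans (by linarith)
      calc (y - x) ^ 2 = |y - x| ^ 2 := (sq_abs _).symm
        _ ≤ (|y| + P) ^ 2 := by nlinarith [abs_nonneg (y - x)]
    have h2 : Real.exp (-(|y| + P) ^ 2 / (2 * v)) ≤ Real.exp (-(y - x) ^ 2 / (2 * v)) := by
      apply Real.exp_le_exp.mpr
      have h2v : (0:ℝ) < 2 * v := by linarith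
      exact (div_le_div_iff_of_pos_right h2v).mpr (neg_le_neg h1)
    exact mul_le_mul_of_nonneg_left h2 (by positivity)
  calc (Real.sqrt (2 * Real.pi * v))⁻¹ * Real.exp (-(|y| + P) ^ 2 / (2 * v))
      = ∫ _x, (Real.sqrt (2 * Real.pi * v))⁻¹ * Real.exp (-(|y| + P) ^ 2 / (2 * v)) ∂μ := by simp
    _ ≤ ∫ x, gpdf v x y ∂μ := integral_mono_ae (integrable_const _) (integrable_gpdf_dμ hv μ y) hbd
    _ = outDens v μ y := rfl

lemma outDens_pos {v P : ℝ} (hv : 0 < v) {μ : Measure ℝ} [IsProbabilityMeasure μ]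
    (hsupp : μ (Set.Icc (-P) P) = 1) (y : ℝ) : 0 < outDens v μ y :=
  lt_of_lt_of_le (by positivity) (outDens_ge hv hsupp y)

lemma log_gpdf {v : ℝ} (hv : 0 < v) (x y : ℝ) :
    Real.log (gpdf v x y) = Real.log (Real.sqrt (2 * Real.pi * v))⁻¹ - (y - x) ^ 2 / (2 * v) := by
  unfold gpdf
  rw [Real.log_mul (by positivity) (Real.exp_ne_zero _), Real.log_exp]
  ring

lemma log_ratio_abs_le {v P : ℝ} (hv : 0 < v) (hP : 0 ≤ P) {μ : Measure ℝ}
    [IsProbabilityMeasure μ] (hsupp : μ (Set.Icc (-P) P) = 1) (x y : ℝ) :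
    |Real.log (gpdf v x y / outDens v μ y)| ≤ (2 * y ^ 2 + x ^ 2 + P ^ 2) / v := by
  have hA := gpdf_pos hv x y
  have hB := outDens_pos hv hsupp y
  have hCv : (0:ℝ) < (Real.sqrt (2 * Real.pi * v))⁻¹ := by positivity
  rw [Real.log_div hA.ne' hB.ne']
  have hlogA := log_gpdf hv x y
  have hlogBle : Real.log (outDens v μ y) ≤ Real.log (Real.sqrt (2 * Real.pi * v))⁻¹ :=
    Real.log_le_log hB (outDens_le hv μ y)
  have hlogBge : Real.log (Real.sqrt (2 * Real.pi * v))⁻¹ - (|y| + P) ^ 2 / (2 * v)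
      ≤ Real.log (outDens v μ y) := by
    have := Real.log_le_log (by positivity) (outDens_ge hv hsupp y)
    rw [Real.log_mul hCv.ne' (Real.exp_ne_zero _), Real.log_exp, neg_div] at this
    linarith [this]
  have h2v : (0:ℝ) < 2 * v := by linarith
  have ha : (y - x) ^ 2 / (2 * v) ≤ (2 * y ^ 2 + x ^ 2 + P ^ 2) / v := by
    rw [div_le_div_iff₀ h2v hv]
    nlinarith [sq_nonneg (y + x), sq_nonneg P]
  have hq : (|y| + P) ^ 2 / (2 * v) ≤ (2 * y ^ 2 + x ^ 2 + P ^ 2) / v := by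
    rw [div_le_div_iff₀ h2v hv]
    nlinarith [sq_nonneg (|y| - P), sq_abs y, sq_nonneg x]
  have ha0 : 0 ≤ (y - x) ^ 2 / (2 * v) := by positivity
  rw [abs_le]
  constructor <;> linarith

/-- The combined measurable integrand. -/
lemma measurable_integrand (v : ℝ) (μ : Measure ℝ) [SFinite μ] :
    Measurable (fun p : ℝ × ℝ =>
      gpdf v p.1 p.2 * Real.log (gpdf v p.1 p.2 / outDens v μ p.2)) := by
  have h1 : Measurable (fun p : ℝ × ℝ => gpdf v p.1 p.2) := measurable_gpdf v
  have h2 : Measurable (fun p : ℝ × ℝ => outDens v μ p.2) :=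
    (measurable_outDens v μ).comp measurable_snd
  exact h1.mul (Real.measurable_log.comp (h1.div h2))

lemma integrable_gpdf_weight {v : ℝ} (hv : 0 < v) (x c d : ℝ) :
    Integrable (fun y => gpdf v x y * (c + d * y ^ 2)) := by
  have : (fun y => gpdf v x y * (c + d * y ^ 2))
      = fun y => c * gpdf v x y + d * (gpdf v x y * y ^ 2) := by
    funext y; ring
  rw [this]
  exact ((integrable_gpdf hv x).const_mul c).add ((integrable_gpdf_mul_sq hv x).const_mul d)

lemma integrand_abs_le {v P : ℝ} (hv : 0 < v) (hP : 0 ≤ P) {μ : Measure ℝ}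
    [IsProbabilityMeasure μ] (hsupp : μ (Set.Icc (-P) P) = 1) (x y : ℝ) :
    ‖gpdf v x y * Real.log (gpdf v x y / outDens v μ y)‖
      ≤ gpdf v x y * ((x ^ 2 + P ^ 2) / v + 2 / v * y ^ 2) := by
  have hg := gpdf_pos hv x y
  rw [norm_mul, Real.norm_eq_abs, Real.norm_eq_abs, abs_of_nonneg hg.le]
  have h := log_ratio_abs_le hv hP hsupp x y
  have : (2 * y ^ 2 + x ^ 2 + P ^ 2) / v = (x ^ 2 + P ^ 2) / v + 2 / v * y ^ 2 := by
    field_simp; ring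
  rw [this] at h
  exact mul_le_mul_of_nonneg_left h hg.le

lemma integrable_integrand {v P : ℝ} (hv : 0 < v) (hP : 0 ≤ P) {μ : Measure ℝ}
    [IsProbabilityMeasure μ] (hsupp : μ (Set.Icc (-P) P) = 1) (x : ℝ) :
    Integrable (fun y => gpdf v x y * Real.log (gpdf v x y / outDens v μ y)) := by
  apply Integrable.mono' (integrable_gpdf_weight hv x ((x ^ 2 + P ^ 2) / v) (2 / v))
  · exact ((measurable_integrand v μ).comp
      (measurable_const.prodMk measurable_id)).aestronglyMeasurable
  · exact Filter.Eventually.of_forall (integrand_abs_le hv hP hsupp x)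

lemma stronglyMeasurable_infoDens (v : ℝ) (μ : Measure ℝ) [SFinite μ] :
    StronglyMeasurable (infoDens v μ) :=
  (measurable_integrand v μ).stronglyMeasurable.integral_prod_right'

/-- second moment of the Gaussian about its mean -/
lemma integral_gpdf_mul_sq_le {v : ℝ} (hv : 0 < v) (x : ℝ) :
    ∫ y, gpdf v x y * y ^ 2 ≤ 2 * (∫ z, gpdf v 0 z * z ^ 2) + 2 * x ^ 2 := by
  have hshift : Integrable (fun y => gpdf v 0 (y - x) * (y - x) ^ 2) :=
    (integrable_gpdf_mul_sq hv 0).comp_sub_right x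
  have hI2 : Integrable (fun y => 2 * (gpdf v 0 (y - x) * (y - x) ^ 2) + 2 * x ^ 2 * gpdf v x y) := by
    apply (hshift.const_mul 2).add
    exact (integrable_gpdf hv x).const_mul _
  have hmono : ∫ y, gpdf v x y * y ^ 2
      ≤ ∫ y, (2 * (gpdf v 0 (y - x) * (y - x) ^ 2) + 2 * x ^ 2 * gpdf v x y) := by
    apply integral_mono (integrable_gpdf_mul_sq hv x) hI2
    intro y
    have hg := gpdf_pos hv x y
    have hsq : y ^ 2 ≤ 2 * (y - x) ^ 2 + 2 * x ^ 2 := by nlinarith [sq_nonneg (y - 2 * x)]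
    have := mul_le_mul_of_nonneg_left hsq hg.le
    simp only [← gpdf_shift v x y]
    calc gpdf v x y * y ^ 2 ≤ gpdf v x y * (2 * (y - x) ^ 2 + 2 * x ^ 2) := this
      _ = 2 * (gpdf v x y * (y - x) ^ 2) + 2 * x ^ 2 * gpdf v x y := by ring
  refine hmono.trans (le_of_eq ?_)
  rw [integral_add (hshift.const_mul 2) ((integrable_gpdf hv x).const_mul _),
    integral_const_mul, integral_const_mul,
    integral_sub_right_eq_self (fun z => gpdf v 0 z * z ^ 2) x, integral_gpdf hv x, mul_one]

lemma abs_infoDens_le {v P : ℝ} (hv : 0 < v) (hP : 0 ≤ P) {μ : Measure ℝ}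
    [IsProbabilityMeasure μ] (hsupp : μ (Set.Icc (-P) P) = 1) (x : ℝ) :
    |infoDens v μ x| ≤ (x ^ 2 + P ^ 2) / v
      + 2 / v * (2 * (∫ z, gpdf v 0 z * z ^ 2) + 2 * x ^ 2) := by
  have h1 : ‖infoDens v μ x‖ ≤ ∫ y, gpdf v x y * ((x ^ 2 + P ^ 2) / v + 2 / v * y ^ 2) :=
    norm_integral_le_of_norm_le (integrable_gpdf_weight hv x _ _)
      (Filter.Eventually.of_forall (integrand_abs_le hv hP hsupp x))
  rw [Real.norm_eq_abs] at h1
  refine h1.trans ?_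
  have hsplit : (fun y => gpdf v x y * ((x ^ 2 + P ^ 2) / v + 2 / v * y ^ 2))
      = fun y => (x ^ 2 + P ^ 2) / v * gpdf v x y + 2 / v * (gpdf v x y * y ^ 2) := by
    funext y; ring
  rw [hsplit, integral_add (((integrable_gpdf hv x).const_mul _))
    ((integrable_gpdf_mul_sq hv x).const_mul _), integral_const_mul, integral_const_mul,
    integral_gpdf hv x, mul_one]
  have h2 : (0:ℝ) ≤ 2 / v := by positivity
  have := integral_gpdf_mul_sq_le hv x
  nlinarith [mul_le_mul_of_nonneg_left this h2]

lemma integrable_infoDens {v P : ℝ} (hv : 0 < v) (hP : 0 ≤ P) {μ : Measure ℝ}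
    [IsProbabilityMeasure μ] (hsupp : μ (Set.Icc (-P) P) = 1) :
    Integrable (infoDens v μ) μ := by
  set J := ∫ z, gpdf v 0 z * z ^ 2 with hJ
  apply Integrable.mono' (integrable_const ((P ^ 2 + P ^ 2) / v + 2 / v * (2 * J + 2 * P ^ 2)))
  · exact (stronglyMeasurable_infoDens v μ).aestronglyMeasurable
  · filter_upwards [ae_mem_Icc hsupp] with x hx
    have hx2 : x ^ 2 ≤ P ^ 2 := sq_le_sq' (by linarith [hx.1]) hx.2
    have h := abs_infoDens_le hv hP hsupp x
    rw [Real.norm_eq_abs]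
    have hv' : (0:ℝ) ≤ 1 / v := by positivity
    refine h.trans ?_
    have : (0:ℝ) ≤ 2 / v := by positivity
    have hd : (x ^ 2 + P ^ 2) / v ≤ (P ^ 2 + P ^ 2) / v := by
      gcongr
    nlinarith

/-- Log-sum (Gibbs/Jensen) inequality for integrals. -/
lemma jensen_log {a b : ℝ → ℝ} (ha : ∀ t, 0 < a t) (hb : ∀ t, 0 < b t)
    (hia : Integrable a) (hib : Integrable b)
    (hiab : Integrable (fun t => a t * Real.log (a t / b t)))
    (hA : 0 < ∫ t, a t) (hB : 0 < ∫ t, b t) :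
    (∫ t, a t) * Real.log ((∫ t, a t) / (∫ t, b t)) ≤ ∫ t, a t * Real.log (a t / b t) := by
  set A := ∫ t, a t with hAdef
  set B := ∫ t, b t with hBdef
  set lam := A / B with hlam
  have hlam0 : 0 < lam := div_pos hA hB
  have hpt : ∀ t, a t * Real.log lam + (a t - lam * b t) ≤ a t * Real.log (a t / b t) := by
    intro t
    have hα := ha t
    have hβ := hb t
    have hkey : Real.log (a t / b t) = Real.log (a t / (lam * b t)) + Real.log lam := by
      rw [← Real.log_mul (by positivity) hlam0.ne']
      congr 1
      field_simp
    have h1 : Real.log (lam * b t / a t) ≤ lam * b t / a t - 1 :=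
      Real.log_le_sub_one_of_pos (by positivity)
    have hinv : Real.log (lam * b t / a t) = - Real.log (a t / (lam * b t)) := by
      rw [← Real.log_inv]
      congr 1
      field_simp
    have h2 : 1 - lam * b t / a t ≤ Real.log (a t / (lam * b t)) := by
      rw [hinv] at h1; linarith
    have h3 : a t - lam * b t ≤ a t * Real.log (a t / (lam * b t)) := by
      have := mul_le_mul_of_nonneg_left h2 hα.le
      have heq : a t * (1 - lam * b t / a t) = a t - lam * b t := by field_simp
      linarith [heq ▸ this]
    rw [hkey]
    nlinarith
  have hg : Integrable (fun t => a t - lam * b t) := hia.sub (hib.const_mul lam)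
  have hLHSint : Integrable (fun t => a t * Real.log lam + (a t - lam * b t)) :=
    (hia.mul_const _).add hg
  have h := integral_mono hLHSint hiab hpt
  have e2 : ∫ t, (a t - lam * b t) = A - lam * B := by
    rw [integral_sub hia (hib.const_mul lam), integral_const_mul]
  have hcalc : ∫ t, (a t * Real.log lam + (a t - lam * b t))
      = A * Real.log lam + (A - lam * B) := by
    rw [integral_add (hia.mul_const _) hg, integral_mul_const, e2]
  have hlamB : lam * B = A := by
    rw [hlam]; field_simp
  rw [hcalc, hlamB] at h
  simpa using h

/-- Convolution identity for the output density. -/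
lemma outDens_conv {u v : ℝ} (hu : 0 < u) (hv : 0 < v) {μ : Measure ℝ}
    [IsProbabilityMeasure μ] (y : ℝ) :
    outDens (u + v) μ y = ∫ t, gpdf u 0 t * outDens v μ (y - t) := by
  have hmaj : Integrable (fun z : ℝ × ℝ =>
      (fun _ : ℝ => (Real.sqrt (2 * Real.pi * v))⁻¹) z.1 * gpdf u 0 z.2) (μ.prod volume) :=
    (integrable_const _).mul_prod (integrable_gpdf hu 0)
  have hmeas : AEStronglyMeasurable (fun p : ℝ × ℝ => gpdf u 0 p.2 * gpdf v p.1 (y - p.2))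
      (μ.prod volume) := by
    apply Continuous.aestronglyMeasurable
    unfold gpdf
    fun_prop
  have hint : Integrable (fun p : ℝ × ℝ => gpdf u 0 p.2 * gpdf v p.1 (y - p.2))
      (μ.prod volume) := by
    apply hmaj.mono' hmeas
    refine Filter.Eventually.of_forall (fun p => ?_)
    have h1 := gpdf_pos hu 0 p.2
    have h2 := gpdf_pos hv p.1 (y - p.2)
    have h3 := gpdf_le hv p.1 (y - p.2)
    rw [Real.norm_eq_abs, abs_of_nonneg (by positivity)]
    calc gpdf u 0 p.2 * gpdf v p.1 (y - p.2)
        ≤ gpdf u 0 p.2 * (Real.sqrt (2 * Real.pi * v))⁻¹ :=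
          mul_le_mul_of_nonneg_left h3 h1.le
      _ = (Real.sqrt (2 * Real.pi * v))⁻¹ * gpdf u 0 p.2 := mul_comm _ _
  have hint' : Integrable (Function.uncurry fun x t => gpdf u 0 t * gpdf v x (y - t))
      (μ.prod volume) := hint
  calc outDens (u + v) μ y
      = ∫ x, (∫ t, gpdf u 0 t * gpdf v x (y - t)) ∂μ := by
        refine integral_congr_ae (Filter.Eventually.of_forall fun x => ?_)
        exact (gpdf_conv hu hv x y).symm
    _ = ∫ t, (∫ x, gpdf u 0 t * gpdf v x (y - t) ∂μ) := integral_integral_swap hint'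
    _ = ∫ t, gpdf u 0 t * outDens v μ (y - t) := by
        refine integral_congr_ae (Filter.Eventually.of_forall fun t => ?_)
        show (∫ x, gpdf u 0 t * gpdf v x (y - t) ∂μ) = gpdf u 0 t * outDens v μ (y - t)
        rw [integral_const_mul]
        rfl

lemma measurable_gpdf1 (v x : ℝ) : Measurable (gpdf v x) := by
  unfold gpdf; fun_prop

lemma measurable_q (v x : ℝ) (μ : Measure ℝ) [SFinite μ] :
    Measurable (fun z => gpdf v x z * Real.log (gpdf v x z / outDens v μ z)) :=
  (measurable_gpdf1 v x).mul
    (Real.measurable_log.comp ((measurable_gpdf1 v x).div (measurable_outDens v μ)))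

lemma integrable_gpdf_mul_comp {u : ℝ} (hu : 0 < u) {f : ℝ → ℝ} (hf : Measurable f)
    {C : ℝ} (hbd : ∀ z, ‖f z‖ ≤ C) (y : ℝ) :
    Integrable (fun t => gpdf u 0 t * f (y - t)) := by
  apply Integrable.mono' ((integrable_gpdf hu 0).mul_const C)
  · exact ((measurable_gpdf1 u 0).mul
      (hf.comp (measurable_const.sub measurable_id))).aestronglyMeasurable
  · refine Filter.Eventually.of_forall (fun t => ?_)
    have hg := gpdf_pos hu 0 t
    rw [norm_mul, Real.norm_eq_abs (gpdf u 0 t), abs_of_nonneg hg.le]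
    exact mul_le_mul_of_nonneg_left (hbd _) hg.le

lemma infoDens_anti {u v P : ℝ} (hu : 0 < u) (hv : 0 < v) (hP : 0 ≤ P) {μ : Measure ℝ}
    [IsProbabilityMeasure μ] (hsupp : μ (Set.Icc (-P) P) = 1) (x : ℝ) :
    infoDens (u + v) μ x ≤ infoDens v μ x := by
  have huv : 0 < u + v := by linarith
  set q : ℝ → ℝ := fun z => gpdf v x z * Real.log (gpdf v x z / outDens v μ z) with hqdef
  have hq_int : Integrable q := integrable_integrand hv hP hsupp x
  have hq_meas : Measurable q := measurable_q v x μ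
  -- joint integrability of (t, y) ↦ gpdf u 0 t * q (y - t)
  have hmeas_h : AEStronglyMeasurable (fun p : ℝ × ℝ => gpdf u 0 p.1 * q (p.2 - p.1))
      (volume.prod volume) := by
    apply Measurable.aestronglyMeasurable
    exact ((measurable_gpdf1 u 0).comp measurable_fst).mul
      (hq_meas.comp (measurable_snd.sub measurable_fst))
  have hsec : ∀ t : ℝ, Integrable (fun y => gpdf u 0 t * q (y - t)) :=
    fun t => (hq_int.comp_sub_right t).const_mul _
  have hnorm_eq : (fun t => ∫ y, ‖gpdf u 0 t * q (y - t)‖)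
      = fun t => gpdf u 0 t * ∫ z, ‖q z‖ := by
    funext t
    have hg := gpdf_pos hu 0 t
    calc ∫ y, ‖gpdf u 0 t * q (y - t)‖
        = ∫ y, gpdf u 0 t * ‖q (y - t)‖ := by
          congr 1; funext y
          rw [norm_mul, Real.norm_eq_abs (gpdf u 0 t), abs_of_nonneg hg.le]
      _ = gpdf u 0 t * ∫ y, ‖q (y - t)‖ := integral_const_mul _ _
      _ = gpdf u 0 t * ∫ z, ‖q z‖ := by
          rw [integral_sub_right_eq_self (fun z => ‖q z‖) t]
  have hprod : Integrable (fun p : ℝ × ℝ => gpdf u 0 p.1 * q (p.2 - p.1))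
      (volume.prod volume) := by
    refine (integrable_prod_iff hmeas_h).mpr ⟨Filter.Eventually.of_forall hsec, ?_⟩
    rw [hnorm_eq]
    exact (integrable_gpdf hu 0).mul_const _
  have hΦ_int : Integrable (fun y => ∫ t, gpdf u 0 t * q (y - t)) :=
    hprod.swap.integral_prod_left
  -- pointwise Jensen step
  have hjensen : ∀ y, gpdf (u + v) x y * Real.log (gpdf (u + v) x y / outDens (u + v) μ y)
      ≤ ∫ t, gpdf u 0 t * q (y - t) := by
    intro y
    set a : ℝ → ℝ := fun t => gpdf u 0 t * gpdf v x (y - t) with hadef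
    set b : ℝ → ℝ := fun t => gpdf u 0 t * outDens v μ (y - t) with hbdef
    have ha : ∀ t, 0 < a t := fun t => mul_pos (gpdf_pos hu 0 t) (gpdf_pos hv x _)
    have hb : ∀ t, 0 < b t := fun t => mul_pos (gpdf_pos hu 0 t) (outDens_pos hv hsupp _)
    have hia : Integrable a := integrable_gpdf_mul_comp hu (measurable_gpdf1 v x)
      (fun z => by rw [Real.norm_eq_abs, abs_of_nonneg (gpdf_pos hv x z).le]
                   exact gpdf_le hv x z) y
    have hib : Integrable b := integrable_gpdf_mul_comp hu (measurable_outDens v μ)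
      (fun z => by rw [Real.norm_eq_abs, abs_of_nonneg (outDens_pos hv hsupp z).le]
                   exact outDens_le hv μ z) y
    have hcancel : ∀ t, a t * Real.log (a t / b t) = gpdf u 0 t * q (y - t) := by
      intro t
      have hne := (gpdf_pos hu 0 t).ne'
      have : a t / b t = gpdf v x (y - t) / outDens v μ (y - t) :=
        mul_div_mul_left _ _ hne
      rw [this, hqdef]
      show gpdf u 0 t * gpdf v x (y - t) * Real.log (gpdf v x (y - t) / outDens v μ (y - t)) = _
      ring
    have hiab : Integrable (fun t => a t * Real.log (a t / b t)) := by
      set Cv := (Real.sqrt (2 * Real.pi * v))⁻¹ with hCv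
      have hCv0 : 0 < Cv := by rw [hCv]; positivity
      apply Integrable.mono'
        (integrable_gpdf_weight hu 0 (Cv * ((x ^ 2 + P ^ 2) / v + 4 * y ^ 2 / v)) (Cv * (4 / v)))
      · apply Measurable.aestronglyMeasurable
        have : (fun t => a t * Real.log (a t / b t)) = fun t => gpdf u 0 t * q (y - t) :=
          funext hcancel
        rw [this]
        exact (measurable_gpdf1 u 0).mul
          ((measurable_q v x μ).comp (measurable_const.sub measurable_id))
      · refine Filter.Eventually.of_forall (fun t => ?_)
        rw [hcancel t, norm_mul, Real.norm_eq_abs (gpdf u 0 t),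
          abs_of_nonneg (gpdf_pos hu 0 t).le]
        have hqb := integrand_abs_le hv hP hsupp x (y - t)
        have hgb := gpdf_le hv x (y - t)
        have hg0 := gpdf_pos hv x (y - t)
        have hW : ‖q (y - t)‖ ≤ Cv * ((x ^ 2 + P ^ 2) / v + 4 * y ^ 2 / v) + Cv * (4 / v) * t ^ 2 := by
          refine hqb.trans ?_
          have h1 : (x ^ 2 + P ^ 2) / v + 2 / v * (y - t) ^ 2
              ≤ (x ^ 2 + P ^ 2) / v + 4 * y ^ 2 / v + 4 / v * t ^ 2 := by
            have hvi : (0:ℝ) < 1 / v := by positivity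
            have : (y - t) ^ 2 ≤ 2 * y ^ 2 + 2 * t ^ 2 := by nlinarith [sq_nonneg (y + t)]
            have h2 : 2 / v * (y - t) ^ 2 ≤ 2 / v * (2 * y ^ 2 + 2 * t ^ 2) :=
              mul_le_mul_of_nonneg_left this (by positivity)
            have h3 : 2 / v * (2 * y ^ 2 + 2 * t ^ 2) = 4 * y ^ 2 / v + 4 / v * t ^ 2 := by
              field_simp; ring
            linarith
          have hwt : (0:ℝ) ≤ (x ^ 2 + P ^ 2) / v + 2 / v * (y - t) ^ 2 := by positivity
          calc gpdf v x (y - t) * ((x ^ 2 + P ^ 2) / v + 2 / v * (y - t) ^ 2)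
              ≤ Cv * ((x ^ 2 + P ^ 2) / v + 2 / v * (y - t) ^ 2) :=
                mul_le_mul_of_nonneg_right hgb hwt
            _ ≤ Cv * ((x ^ 2 + P ^ 2) / v + 4 * y ^ 2 / v + 4 / v * t ^ 2) :=
                mul_le_mul_of_nonneg_left h1 hCv0.le
            _ = Cv * ((x ^ 2 + P ^ 2) / v + 4 * y ^ 2 / v) + Cv * (4 / v) * t ^ 2 := by ring
        calc gpdf u 0 t * ‖q (y - t)‖
            ≤ gpdf u 0 t * (Cv * ((x ^ 2 + P ^ 2) / v + 4 * y ^ 2 / v) + Cv * (4 / v) * t ^ 2) :=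
              mul_le_mul_of_nonneg_left hW (gpdf_pos hu 0 t).le
          _ = gpdf u 0 t * (Cv * ((x ^ 2 + P ^ 2) / v + 4 * y ^ 2 / v) + Cv * (4 / v) * t ^ 2) := rfl
    have hintA : ∫ t, a t = gpdf (u + v) x y := gpdf_conv hu hv x y
    have hintB : ∫ t, b t = outDens (u + v) μ y := (outDens_conv hu hv y).symm
    have hA : 0 < ∫ t, a t := hintA ▸ gpdf_pos huv x y
    have hB : 0 < ∫ t, b t := hintB ▸ outDens_pos huv hsupp y
    have h := jensen_log ha hb hia hib hiab hA hB
    rw [hintA, hintB] at h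
    refine h.trans (le_of_eq ?_)
    exact integral_congr_ae (Filter.Eventually.of_forall hcancel)
  -- put it together
  have h1 : infoDens (u + v) μ x ≤ ∫ y, ∫ t, gpdf u 0 t * q (y - t) :=
    integral_mono (integrable_integrand huv hP hsupp x) hΦ_int hjensen
  refine h1.trans (le_of_eq ?_)
  have hswap : Integrable (Function.uncurry fun y t => gpdf u 0 t * q (y - t))
      ((volume : Measure ℝ).prod volume) := by
    exact hprod.swap
  calc ∫ y, ∫ t, gpdf u 0 t * q (y - t)
      = ∫ t, ∫ y, gpdf u 0 t * q (y - t) := integral_integral_swap hswap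
    _ = ∫ t, gpdf u 0 t * infoDens v μ x := by
        refine integral_congr_ae (Filter.Eventually.of_forall fun t => ?_)
        show (∫ y, gpdf u 0 t * q (y - t)) = gpdf u 0 t * infoDens v μ x
        rw [integral_const_mul, integral_sub_right_eq_self q t]
        rfl
    _ = infoDens v μ x := by
        rw [integral_mul_const, integral_gpdf hu 0, one_mul]

lemma miAWGN_anti {v w P : ℝ} (hv : 0 < v) (hvw : v ≤ w) (hP : 0 ≤ P) {μ : Measure ℝ}
    [IsProbabilityMeasure μ] (hsupp : μ (Set.Icc (-P) P) = 1) :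
    miAWGN w μ ≤ miAWGN v μ := by
  rcases eq_or_lt_of_le hvw with rfl | hlt
  · exact le_refl _
  · have hw : 0 < w := lt_trans hv hlt
    have hw' : w = (w - v) + v := by ring
    unfold miAWGN
    apply integral_mono (by rw [hw']; exact integrable_infoDens (by rw [← hw']; exact hw) hP hsupp)
      (integrable_infoDens hv hP hsupp)
    intro x
    have := infoDens_anti (u := w - v) (by linarith) hv hP hsupp x
    rwa [← hw'] at this

end GaussAux


open GaussAux

/-- **Reduction of the Gaussian multicast capacity-energy function to a single extremal
channel:** `C(B,P)`, the supremum of `min_ℓ I(X; Y(ℓ))` over input distributions on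
`[-P, P]` satisfying `E[X²] + σ_ℓ² ≥ B` for every `ℓ`, equals the supremum of
`I(X; Y(ℓ_max))` over input distributions on `[-P, P]` satisfying only
`E[X²] + σ²_{ℓ_min} ≥ B`, where `ℓ_min` is the least-noisy and `ℓ_max` the noisiest
channel. -/
theorem gaussian_multicast_capacity_reduction
    {L : ℕ} (hL : 0 < L) (v : Fin L → ℝ) (hv : ∀ ℓ, 0 < v ℓ)
    (P B : ℝ) (hP : 0 < P)
    (ℓmin ℓmax : Fin L)
    (hmin : ∀ ℓ, v ℓmin ≤ v ℓ) (hmax : ∀ ℓ, v ℓ ≤ v ℓmax) :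
    sSup { r : ℝ | ∃ μ : Measure ℝ, IsProbabilityMeasure μ ∧
        μ (Set.Icc (-P) P) = 1 ∧
        (∀ ℓ, B ≤ (∫ x, x ^ 2 ∂μ) + v ℓ) ∧
        r = ⨅ ℓ, miAWGN (v ℓ) μ }
      = sSup { r : ℝ | ∃ μ : Measure ℝ, IsProbabilityMeasure μ ∧
        μ (Set.Icc (-P) P) = 1 ∧
        B ≤ (∫ x, x ^ 2 ∂μ) + v ℓmin ∧
        r = miAWGN (v ℓmax) μ } := by
  haveI : Nonempty (Fin L) := ⟨⟨0, hL⟩⟩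
  congr 1
  ext r
  simp only [Set.mem_setOf_eq]
  constructor
  · rintro ⟨μ, hprob, hsupp, hcons, rfl⟩
    haveI := hprob
    refine ⟨μ, hprob, hsupp, hcons ℓmin, ?_⟩
    apply le_antisymm
    · exact ciInf_le (Finite.bddBelow_range _) ℓmax
    · exact le_ciInf (fun ℓ => miAWGN_anti (hv ℓ) (hmax ℓ) hP.le hsupp)
  · rintro ⟨μ, hprob, hsupp, hcons, rfl⟩
    haveI := hprob
    refine ⟨μ, hprob, hsupp, fun ℓ => le_trans hcons (by linarith [hmin ℓ]), ?_⟩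
    apply le_antisymm
    · exact le_ciInf (fun ℓ => miAWGN_anti (hv ℓ) (hmax ℓ) hP.le hsupp)
    · exact ciInf_le (Finite.bddBelow_range _) ℓmax

end
end
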